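/- arXiv:2012.12846 — 2 statements merged into one kernel-verified Lean document; each statement's English description precedes it below -/
import Mathlib

section
/- A maximal empty anchored box in a corner region is determined by its three supports: if P ⊂ (0,∞)³ is finite with pairwise distinct coordinates per axis, and T = [0,x]×[0,y]×[0,z] is maximal among boxes anchored at the origin with interior disjoint from P and contained in [0,N]³, then each of x, y, z either equals N or equals the corresponding coordinate of some point of P lying on the relative interior of the corresponding face of T; and the triple of these supports (with N-flags) uniquely determines T. -/
/-- The interior of the anchored box `[0,x]×[0,y]×[0,z]`. -/
def anchoredInt (x y z : ℝ) : Set (Fin 3 → ℝ) :=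
  {p | (0 < p 0 ∧ p 0 < x) ∧ (0 < p 1 ∧ p 1 < y) ∧ (0 < p 2 ∧ p 2 < z)}

/-- `[0,x]×[0,y]×[0,z]` is a maximal empty anchored box within `[0,N]³`: its interior
avoids `P` and no empty anchored box contained in `[0,N]³` strictly contains it. -/
def MaxEmptyAnchored (P : Set (Fin 3 → ℝ)) (N x y z : ℝ) : Prop :=
  (0 < x ∧ x ≤ N) ∧ (0 < y ∧ y ≤ N) ∧ (0 < z ∧ z ≤ N) ∧
  anchoredInt x y z ∩ P = ∅ ∧
  ¬ ∃ x' y' z' : ℝ, (0 < x' ∧ x' ≤ N) ∧ (0 < y' ∧ y' ≤ N) ∧ (0 < z' ∧ z' ≤ N) ∧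
    anchoredInt x' y' z' ∩ P = ∅ ∧
    x ≤ x' ∧ y ≤ y' ∧ z ≤ z' ∧ (x, y, z) ≠ (x', y', z')

lemma grow0 (P : Set (Fin 3 → ℝ)) (hfin : P.Finite) (N x y z : ℝ)
    (hpos : ∀ p ∈ P, ∀ i, 0 < p i)
    (hxN : x < N)
    (hem : anchoredInt x y z ∩ P = ∅)
    (hno : ∀ p ∈ P, ¬ (p 0 = x ∧ p 1 < y ∧ p 2 < z)) :
    ∃ x', x < x' ∧ x' ≤ N ∧ anchoredInt x' y z ∩ P = ∅ := by
  classical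
  set F := hfin.toFinset.filter (fun p => p 1 < y ∧ p 2 < z) with hF
  set s : Finset ℝ := insert N (F.image (fun p => p 0)) with hs
  have hsne : s.Nonempty := ⟨N, Finset.mem_insert_self _ _⟩
  have key : ∀ p ∈ P, p 1 < y → p 2 < z → x < p 0 := by
    intro p hp h1 h2
    rcases lt_trichotomy (p 0) x with h | h | h
    · exfalso
      have hm : p ∈ anchoredInt x y z ∩ P :=
        ⟨⟨⟨hpos p hp 0, h⟩, ⟨hpos p hp 1, h1⟩, ⟨hpos p hp 2, h2⟩⟩, hp⟩
      rw [hem] at hm; exact hm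
    · exact absurd ⟨h, h1, h2⟩ (hno p hp)
    · exact h
  refine ⟨s.min' hsne, ?_, ?_, ?_⟩
  · rw [Finset.lt_min'_iff]
    intro b hb
    rcases Finset.mem_insert.1 hb with rfl | hb
    · exact hxN
    · obtain ⟨p, hp, rfl⟩ := Finset.mem_image.1 hb
      rw [Finset.mem_filter, Set.Finite.mem_toFinset] at hp
      exact key p hp.1 hp.2.1 hp.2.2
  · exact Finset.min'_le _ _ (Finset.mem_insert_self _ _)
  · rw [Set.eq_empty_iff_forall_notMem]
    rintro p ⟨⟨⟨_, h0⟩, ⟨_, h1⟩, ⟨_, h2⟩⟩, hp⟩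
    have : p 0 ∈ s := Finset.mem_insert_of_mem (Finset.mem_image_of_mem _
      (by rw [Finset.mem_filter, Set.Finite.mem_toFinset]; exact ⟨hp, h1, h2⟩))
    exact absurd h0 (not_lt.2 (Finset.min'_le _ _ this))

lemma grow1 (P : Set (Fin 3 → ℝ)) (hfin : P.Finite) (N x y z : ℝ)
    (hpos : ∀ p ∈ P, ∀ i, 0 < p i)
    (hyN : y < N)
    (hem : anchoredInt x y z ∩ P = ∅)
    (hno : ∀ p ∈ P, ¬ (p 1 = y ∧ p 0 < x ∧ p 2 < z)) :
    ∃ y', y < y' ∧ y' ≤ N ∧ anchoredInt x y' z ∩ P = ∅ := by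
  classical
  set F := hfin.toFinset.filter (fun p => p 0 < x ∧ p 2 < z) with hF
  set s : Finset ℝ := insert N (F.image (fun p => p 1)) with hs
  have hsne : s.Nonempty := ⟨N, Finset.mem_insert_self _ _⟩
  have key : ∀ p ∈ P, p 0 < x → p 2 < z → y < p 1 := by
    intro p hp h0 h2
    rcases lt_trichotomy (p 1) y with h | h | h
    · exfalso
      have hm : p ∈ anchoredInt x y z ∩ P :=
        ⟨⟨⟨hpos p hp 0, h0⟩, ⟨hpos p hp 1, h⟩, ⟨hpos p hp 2, h2⟩⟩, hp⟩
      rw [hem] at hm; exact hm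
    · exact absurd ⟨h, h0, h2⟩ (hno p hp)
    · exact h
  refine ⟨s.min' hsne, ?_, ?_, ?_⟩
  · rw [Finset.lt_min'_iff]
    intro b hb
    rcases Finset.mem_insert.1 hb with rfl | hb
    · exact hyN
    · obtain ⟨p, hp, rfl⟩ := Finset.mem_image.1 hb
      rw [Finset.mem_filter, Set.Finite.mem_toFinset] at hp
      exact key p hp.1 hp.2.1 hp.2.2
  · exact Finset.min'_le _ _ (Finset.mem_insert_self _ _)
  · rw [Set.eq_empty_iff_forall_notMem]
    rintro p ⟨⟨⟨_, h0⟩, ⟨_, h1⟩, ⟨_, h2⟩⟩, hp⟩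
    have : p 1 ∈ s := Finset.mem_insert_of_mem (Finset.mem_image_of_mem _
      (by rw [Finset.mem_filter, Set.Finite.mem_toFinset]; exact ⟨hp, h0, h2⟩))
    exact absurd h1 (not_lt.2 (Finset.min'_le _ _ this))

lemma grow2 (P : Set (Fin 3 → ℝ)) (hfin : P.Finite) (N x y z : ℝ)
    (hpos : ∀ p ∈ P, ∀ i, 0 < p i)
    (hzN : z < N)
    (hem : anchoredInt x y z ∩ P = ∅)
    (hno : ∀ p ∈ P, ¬ (p 2 = z ∧ p 0 < x ∧ p 1 < y)) :
    ∃ z', z < z' ∧ z' ≤ N ∧ anchoredInt x y z' ∩ P = ∅ := by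
  classical
  set F := hfin.toFinset.filter (fun p => p 0 < x ∧ p 1 < y) with hF
  set s : Finset ℝ := insert N (F.image (fun p => p 2)) with hs
  have hsne : s.Nonempty := ⟨N, Finset.mem_insert_self _ _⟩
  have key : ∀ p ∈ P, p 0 < x → p 1 < y → z < p 2 := by
    intro p hp h0 h1
    rcases lt_trichotomy (p 2) z with h | h | h
    · exfalso
      have hm : p ∈ anchoredInt x y z ∩ P :=
        ⟨⟨⟨hpos p hp 0, h0⟩, ⟨hpos p hp 1, h1⟩, ⟨hpos p hp 2, h⟩⟩, hp⟩
      rw [hem] at hm; exact hm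
    · exact absurd ⟨h, h0, h1⟩ (hno p hp)
    · exact h
  refine ⟨s.min' hsne, ?_, ?_, ?_⟩
  · rw [Finset.lt_min'_iff]
    intro b hb
    rcases Finset.mem_insert.1 hb with rfl | hb
    · exact hzN
    · obtain ⟨p, hp, rfl⟩ := Finset.mem_image.1 hb
      rw [Finset.mem_filter, Set.Finite.mem_toFinset] at hp
      exact key p hp.1 hp.2.1 hp.2.2
  · exact Finset.min'_le _ _ (Finset.mem_insert_self _ _)
  · rw [Set.eq_empty_iff_forall_notMem]
    rintro p ⟨⟨⟨_, h0⟩, ⟨_, h1⟩, ⟨_, h2⟩⟩, hp⟩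
    have : p 2 ∈ s := Finset.mem_insert_of_mem (Finset.mem_image_of_mem _
      (by rw [Finset.mem_filter, Set.Finite.mem_toFinset]; exact ⟨hp, h0, h1⟩))
    exact absurd h2 (not_lt.2 (Finset.min'_le _ _ this))

/-- A maximal empty anchored box in a corner region is determined by its three
supports: if `P ⊂ (0,N)³` is finite with pairwise distinct coordinates per axis and
`T = [0,x]×[0,y]×[0,z]` is a maximal empty anchored box within `[0,N]³`, then each of
`x`, `y`, `z` either equals `N` or is the corresponding coordinate of a point of `P` in
the relative interior of the corresponding face of `T`; moreover the triple of support
data (with `N`-flags) uniquely determines `T`. -/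
theorem max_empty_anchored_box_supports
    (P : Set (Fin 3 → ℝ)) (hfin : P.Finite) (N : ℝ) (hN : 0 < N)
    (hP : ∀ p ∈ P, ∀ i, 0 < p i ∧ p i < N)
    (hgen : ∀ p ∈ P, ∀ q ∈ P, p ≠ q → ∀ i : Fin 3, p i ≠ q i)
    (x y z : ℝ) (hT : MaxEmptyAnchored P N x y z) :
    ((x = N ∨ ∃ p ∈ P, p 0 = x ∧ p 1 < y ∧ p 2 < z) ∧
     (y = N ∨ ∃ p ∈ P, p 1 = y ∧ p 0 < x ∧ p 2 < z) ∧
     (z = N ∨ ∃ p ∈ P, p 2 = z ∧ p 0 < x ∧ p 1 < y)) ∧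
    (∀ x' y' z' : ℝ, MaxEmptyAnchored P N x' y' z' →
      ((x = N ∧ x' = N) ∨ ∃ p ∈ P, (p 0 = x ∧ p 1 < y ∧ p 2 < z) ∧
        (p 0 = x' ∧ p 1 < y' ∧ p 2 < z')) →
      ((y = N ∧ y' = N) ∨ ∃ p ∈ P, (p 1 = y ∧ p 0 < x ∧ p 2 < z) ∧
        (p 1 = y' ∧ p 0 < x' ∧ p 2 < z')) →
      ((z = N ∧ z' = N) ∨ ∃ p ∈ P, (p 2 = z ∧ p 0 < x ∧ p 1 < y) ∧
        (p 2 = z' ∧ p 0 < x' ∧ p 1 < y')) →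
      (x, y, z) = (x', y', z')) := by
  obtain ⟨⟨hx, hxN⟩, ⟨hy, hyN⟩, ⟨hz, hzN⟩, hem, hmax⟩ := hT
  have hpos : ∀ p ∈ P, ∀ i, 0 < p i := fun p hp i => (hP p hp i).1
  constructor
  · refine ⟨?_, ?_, ?_⟩
    · rcases eq_or_lt_of_le hxN with hEq | hlt
      · exact Or.inl hEq
      · right
        by_contra hcon
        push_neg at hcon
        have hno : ∀ p ∈ P, ¬ (p 0 = x ∧ p 1 < y ∧ p 2 < z) :=
          fun p hp h => absurd h.2.2 (not_lt.2 (hcon p hp h.1 h.2.1))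
        obtain ⟨x', hlt', hle', hem'⟩ := grow0 P hfin N x y z hpos hlt hem hno
        exact hmax ⟨x', y, z, ⟨lt_trans hx hlt', hle'⟩, ⟨hy, hyN⟩, ⟨hz, hzN⟩, hem',
          le_of_lt hlt', le_refl _, le_refl _,
          fun hq => ne_of_lt hlt' (congrArg Prod.fst hq)⟩
    · rcases eq_or_lt_of_le hyN with hEq | hlt
      · exact Or.inl hEq
      · right
        by_contra hcon
        push_neg at hcon
        have hno : ∀ p ∈ P, ¬ (p 1 = y ∧ p 0 < x ∧ p 2 < z) :=
          fun p hp h => absurd h.2.2 (not_lt.2 (hcon p hp h.1 h.2.1))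
        obtain ⟨y', hlt', hle', hem'⟩ := grow1 P hfin N x y z hpos hlt hem hno
        refine hmax ⟨x, y', z, ⟨hx, hxN⟩, ⟨lt_trans hy hlt', hle'⟩, ⟨hz, hzN⟩, hem',
          le_refl _, le_of_lt hlt', le_refl _, ?_⟩
        intro hq
        exact ne_of_lt hlt' (congrArg (fun t => t.2.1) hq)
    · rcases eq_or_lt_of_le hzN with hEq | hlt
      · exact Or.inl hEq
      · right
        by_contra hcon
        push_neg at hcon
        have hno : ∀ p ∈ P, ¬ (p 2 = z ∧ p 0 < x ∧ p 1 < y) :=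
          fun p hp h => absurd h.2.2 (not_lt.2 (hcon p hp h.1 h.2.1))
        obtain ⟨z', hlt', hle', hem'⟩ := grow2 P hfin N x y z hpos hlt hem hno
        refine hmax ⟨x, y, z', ⟨hx, hxN⟩, ⟨hy, hyN⟩, ⟨lt_trans hz hlt', hle'⟩, hem',
          le_refl _, le_refl _, le_of_lt hlt', ?_⟩
        intro hq
        exact ne_of_lt hlt' (congrArg (fun t => t.2.2) hq)
  · intro x' y' z' _ H0 H1 H2
    have ex : x = x' := by
      rcases H0 with ⟨e1, e2⟩ | ⟨p, _, ⟨e, _⟩, ⟨e', _⟩⟩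
      · rw [e1, e2]
      · rw [← e, ← e']
    have ey : y = y' := by
      rcases H1 with ⟨e1, e2⟩ | ⟨p, _, ⟨e, _⟩, ⟨e', _⟩⟩
      · rw [e1, e2]
      · rw [← e, ← e']
    have ez : z = z' := by
      rcases H2 with ⟨e1, e2⟩ | ⟨p, _, ⟨e, _⟩, ⟨e', _⟩⟩
      · rw [e1, e2]
      · rw [← e, ← e']
    rw [ex, ey, ez]
end

section
/- The number of maximal empty anchored boxes is linear: for P ⊂ (0,N)³ finite with m points having pairwise distinct coordinates per axis, the number of maximal empty boxes anchored at the origin (maximal under inclusion among boxes [0,x]×[0,y]×[0,z] ⊆ [0,N]³ with interior disjoint from P) is at most 2m + 1. -/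
namespace CardMaxAux

variable {P : Set (Fin 3 → ℝ)} {N : ℝ}

lemma point_not_in (hP : ∀ p ∈ P, ∀ i, 0 < p i ∧ p i < N) {x y z : ℝ}
    (h : anchoredInt x y z ∩ P = ∅) {p : Fin 3 → ℝ} (hp : p ∈ P)
    (h0 : p 0 < x) (h1 : p 1 < y) (h2 : p 2 < z) : False := by
  have hmem : p ∈ anchoredInt x y z ∩ P :=
    ⟨⟨⟨(hP p hp 0).1, h0⟩, ⟨(hP p hp 1).1, h1⟩, ⟨(hP p hp 2).1, h2⟩⟩, hp⟩
  rw [h] at hmem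
  exact hmem

lemma empty_of {x y z : ℝ}
    (h : ∀ p ∈ P, ¬ (p 0 < x ∧ p 1 < y ∧ p 2 < z)) :
    anchoredInt x y z ∩ P = ∅ := by
  apply Set.eq_empty_iff_forall_notMem.mpr
  rintro p ⟨⟨⟨_, h0⟩, ⟨_, h1⟩, ⟨_, h2⟩⟩, hp⟩
  exact h p hp ⟨h0, h1, h2⟩

lemma blockerX (hfin : P.Finite)
    (hP : ∀ p ∈ P, ∀ i, 0 < p i ∧ p i < N)
    {x y z : ℝ} (hM : MaxEmptyAnchored P N x y z) :
    x = N ∨ ∃ a ∈ P, a 0 = x ∧ a 1 < y ∧ a 2 < z := by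
  obtain ⟨⟨hx0, hxN⟩, ⟨hy0, hyN⟩, ⟨hz0, hzN⟩, hemp, hmax⟩ := id hM
  by_contra hc
  rw [not_or] at hc
  obtain ⟨hxne, hbl⟩ := hc
  have hxltN : x < N := lt_of_le_of_ne hxN hxne
  have hgt : ∀ p ∈ P, p 1 < y → p 2 < z → x < p 0 := by
    intro p hp h1 h2
    rcases lt_trichotomy (p 0) x with h | h | h
    · exact (point_not_in hP hemp hp h h1 h2).elim
    · exact absurd ⟨p, hp, h, h1, h2⟩ hbl
    · exact h
  set X : Set (Fin 3 → ℝ) := {p ∈ P | p 1 < y ∧ p 2 < z} with hX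
  rcases X.eq_empty_or_nonempty with hXe | hXne
  · refine hmax ⟨N, y, z, ⟨lt_of_lt_of_le hx0 hxN, le_refl N⟩, ⟨hy0, hyN⟩, ⟨hz0, hzN⟩,
      empty_of ?_, hxN, le_refl y, le_refl z, fun h => hxne (congrArg Prod.fst h)⟩
    intro p hp hc2
    have hmem : p ∈ X := ⟨hp, hc2.2.1, hc2.2.2⟩
    rw [hXe] at hmem
    exact hmem
  · obtain ⟨a, haX, hamin⟩ :=
      Set.exists_min_image X (fun p => p 0) (hfin.subset (Set.sep_subset _ _)) hXne
    have hax : x < a 0 := hgt a haX.1 haX.2.1 haX.2.2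
    have hxx' : x < min N (a 0) := lt_min hxltN hax
    refine hmax ⟨min N (a 0), y, z, ⟨lt_trans hx0 hxx', min_le_left _ _⟩,
      ⟨hy0, hyN⟩, ⟨hz0, hzN⟩, empty_of ?_, le_of_lt hxx', le_refl y, le_refl z,
      fun h => absurd (congrArg Prod.fst h) (ne_of_lt hxx')⟩
    intro p hp hc2
    have hpX : p ∈ X := ⟨hp, hc2.2.1, hc2.2.2⟩
    exact absurd (lt_of_lt_of_le hc2.1 (min_le_right _ _)) (not_lt.mpr (hamin p hpX))

lemma blockerY (hfin : P.Finite)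
    (hP : ∀ p ∈ P, ∀ i, 0 < p i ∧ p i < N)
    {x y z : ℝ} (hM : MaxEmptyAnchored P N x y z) :
    y = N ∨ ∃ b ∈ P, b 1 = y ∧ b 0 < x ∧ b 2 < z := by
  obtain ⟨⟨hx0, hxN⟩, ⟨hy0, hyN⟩, ⟨hz0, hzN⟩, hemp, hmax⟩ := id hM
  by_contra hc
  rw [not_or] at hc
  obtain ⟨hyne, hbl⟩ := hc
  have hyltN : y < N := lt_of_le_of_ne hyN hyne
  have hgt : ∀ p ∈ P, p 0 < x → p 2 < z → y < p 1 := by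
    intro p hp h0 h2
    rcases lt_trichotomy (p 1) y with h | h | h
    · exact (point_not_in hP hemp hp h0 h h2).elim
    · exact absurd ⟨p, hp, h, h0, h2⟩ hbl
    · exact h
  set X : Set (Fin 3 → ℝ) := {p ∈ P | p 0 < x ∧ p 2 < z} with hX
  rcases X.eq_empty_or_nonempty with hXe | hXne
  · refine hmax ⟨x, N, z, ⟨hx0, hxN⟩, ⟨lt_of_lt_of_le hy0 hyN, le_refl N⟩, ⟨hz0, hzN⟩,
      empty_of ?_, le_refl x, hyN, le_refl z,
      fun h => hyne (congrArg (fun t => t.2.1) h)⟩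
    intro p hp hc2
    have hmem : p ∈ X := ⟨hp, hc2.1, hc2.2.2⟩
    rw [hXe] at hmem
    exact hmem
  · obtain ⟨b, hbX, hbmin⟩ :=
      Set.exists_min_image X (fun p => p 1) (hfin.subset (Set.sep_subset _ _)) hXne
    have hby : y < b 1 := hgt b hbX.1 hbX.2.1 hbX.2.2
    have hyy' : y < min N (b 1) := lt_min hyltN hby
    refine hmax ⟨x, min N (b 1), z, ⟨hx0, hxN⟩, ⟨lt_trans hy0 hyy', min_le_left _ _⟩,
      ⟨hz0, hzN⟩, empty_of ?_, le_refl x, le_of_lt hyy', le_refl z,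
      fun h => absurd (congrArg (fun t => t.2.1) h) (ne_of_lt hyy')⟩
    intro p hp hc2
    have hpX : p ∈ X := ⟨hp, hc2.1, hc2.2.2⟩
    exact absurd (lt_of_lt_of_le hc2.2.1 (min_le_right _ _)) (not_lt.mpr (hbmin p hpX))

lemma blockerZ (hfin : P.Finite)
    (hP : ∀ p ∈ P, ∀ i, 0 < p i ∧ p i < N)
    {x y z : ℝ} (hM : MaxEmptyAnchored P N x y z) :
    z = N ∨ ∃ c ∈ P, c 2 = z ∧ c 0 < x ∧ c 1 < y := by
  obtain ⟨⟨hx0, hxN⟩, ⟨hy0, hyN⟩, ⟨hz0, hzN⟩, hemp, hmax⟩ := id hM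
  by_contra hc
  rw [not_or] at hc
  obtain ⟨hzne, hbl⟩ := hc
  have hzltN : z < N := lt_of_le_of_ne hzN hzne
  have hgt : ∀ p ∈ P, p 0 < x → p 1 < y → z < p 2 := by
    intro p hp h0 h1
    rcases lt_trichotomy (p 2) z with h | h | h
    · exact (point_not_in hP hemp hp h0 h1 h).elim
    · exact absurd ⟨p, hp, h, h0, h1⟩ hbl
    · exact h
  set X : Set (Fin 3 → ℝ) := {p ∈ P | p 0 < x ∧ p 1 < y} with hX
  rcases X.eq_empty_or_nonempty with hXe | hXne
  · refine hmax ⟨x, y, N, ⟨hx0, hxN⟩, ⟨hy0, hyN⟩, ⟨lt_of_lt_of_le hz0 hzN, le_refl N⟩,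
      empty_of ?_, le_refl x, le_refl y, hzN,
      fun h => hzne (congrArg (fun t => t.2.2) h)⟩
    intro p hp hc2
    have hmem : p ∈ X := ⟨hp, hc2.1, hc2.2.1⟩
    rw [hXe] at hmem
    exact hmem
  · obtain ⟨c, hcX, hcmin⟩ :=
      Set.exists_min_image X (fun p => p 2) (hfin.subset (Set.sep_subset _ _)) hXne
    have hcz : z < c 2 := hgt c hcX.1 hcX.2.1 hcX.2.2
    have hzz' : z < min N (c 2) := lt_min hzltN hcz
    refine hmax ⟨x, y, min N (c 2), ⟨hx0, hxN⟩, ⟨hy0, hyN⟩,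
      ⟨lt_trans hz0 hzz', min_le_left _ _⟩, empty_of ?_, le_refl x, le_refl y, le_of_lt hzz',
      fun h => absurd (congrArg (fun t => t.2.2) h) (ne_of_lt hzz')⟩
    intro p hp hc2
    have hpX : p ∈ X := ⟨hp, hc2.1, hc2.2.1⟩
    exact absurd (lt_of_lt_of_le hc2.2.2 (min_le_right _ _)) (not_lt.mpr (hcmin p hpX))

lemma left_unique (hfin : P.Finite)
    (hP : ∀ p ∈ P, ∀ i, 0 < p i ∧ p i < N)
    {x y z x' y' z' : ℝ} {a : Fin 3 → ℝ}
    (ht : MaxEmptyAnchored P N x y z) (ht' : MaxEmptyAnchored P N x' y' z')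
    (haP : a ∈ P)
    (hax : a 0 = x) (hay : a 1 < y) (haz : a 2 < z)
    (hs : y = N ∨ ∃ b ∈ P, b 1 = y ∧ b 0 < x ∧ b 2 < a 2)
    (hax' : a 0 = x') (hay' : a 1 < y') (haz' : a 2 < z')
    (hs' : y' = N ∨ ∃ b ∈ P, b 1 = y' ∧ b 0 < x' ∧ b 2 < a 2) :
    x = x' ∧ y = y' ∧ z = z' := by
  have hemp := ht.2.2.2.1
  have hemp' := ht'.2.2.2.1
  have hyN : y ≤ N := ht.2.1.2
  have hyN' : y' ≤ N := ht'.2.1.2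
  have hzN : z ≤ N := ht.2.2.1.2
  have hzN' : z' ≤ N := ht'.2.2.1.2
  have hxx : x = x' := hax.symm.trans hax'
  have hyy : y = y' := by
    rcases lt_trichotomy y y' with h | h | h
    · rcases hs with hEq | ⟨b, hbP, hb1, hb0, hb2⟩
      · rw [hEq] at h; exact absurd hyN' (not_le.mpr h)
      · exact (point_not_in hP hemp' hbP (hxx ▸ hb0) (hb1 ▸ h) (hb2.trans haz')).elim
    · exact h
    · rcases hs' with hEq | ⟨b, hbP, hb1, hb0, hb2⟩
      · rw [hEq] at h; exact absurd hyN (not_le.mpr h)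
      · exact (point_not_in hP hemp hbP (hxx ▸ hb0) (hb1 ▸ h) (hb2.trans haz)).elim
  refine ⟨hxx, hyy, ?_⟩
  rcases lt_trichotomy z z' with h | h | h
  · rcases blockerZ hfin hP ht with hEq | ⟨c, hcP, hc2, hc0, hc1⟩
    · rw [hEq] at h; exact absurd hzN' (not_le.mpr h)
    · exact (point_not_in hP hemp' hcP (hxx ▸ hc0) (hyy ▸ hc1) (hc2 ▸ h)).elim
  · exact h
  · rcases blockerZ hfin hP ht' with hEq | ⟨c, hcP, hc2, hc0, hc1⟩
    · rw [hEq] at h; exact absurd hzN (not_le.mpr h)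
    · exact (point_not_in hP hemp hcP (hxx ▸ hc0) (hyy ▸ hc1) (hc2 ▸ h)).elim

lemma right_unique (hfin : P.Finite)
    (hP : ∀ p ∈ P, ∀ i, 0 < p i ∧ p i < N)
    {x y z x' y' z' : ℝ} {a : Fin 3 → ℝ}
    (ht : MaxEmptyAnchored P N x y z) (ht' : MaxEmptyAnchored P N x' y' z')
    (haP : a ∈ P)
    (hay : a 1 = y) (hax : a 0 < x) (haz : a 2 < z)
    (hs : x = N ∨ ∃ b ∈ P, b 0 = x ∧ b 1 < y ∧ b 2 < a 2)
    (hay' : a 1 = y') (hax' : a 0 < x') (haz' : a 2 < z')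
    (hs' : x' = N ∨ ∃ b ∈ P, b 0 = x' ∧ b 1 < y' ∧ b 2 < a 2) :
    x = x' ∧ y = y' ∧ z = z' := by
  have hemp := ht.2.2.2.1
  have hemp' := ht'.2.2.2.1
  have hxN : x ≤ N := ht.1.2
  have hxN' : x' ≤ N := ht'.1.2
  have hzN : z ≤ N := ht.2.2.1.2
  have hzN' : z' ≤ N := ht'.2.2.1.2
  have hyy : y = y' := hay.symm.trans hay'
  have hxx : x = x' := by
    rcases lt_trichotomy x x' with h | h | h
    · rcases hs with hEq | ⟨b, hbP, hb0, hb1, hb2⟩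
      · rw [hEq] at h; exact absurd hxN' (not_le.mpr h)
      · exact (point_not_in hP hemp' hbP (hb0 ▸ h) (hyy ▸ hb1) (hb2.trans haz')).elim
    · exact h
    · rcases hs' with hEq | ⟨b, hbP, hb0, hb1, hb2⟩
      · rw [hEq] at h; exact absurd hxN (not_le.mpr h)
      · exact (point_not_in hP hemp hbP (hb0 ▸ h) (hyy ▸ hb1) (hb2.trans haz)).elim
  refine ⟨hxx, hyy, ?_⟩
  rcases lt_trichotomy z z' with h | h | h
  · rcases blockerZ hfin hP ht with hEq | ⟨c, hcP, hc2, hc0, hc1⟩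
    · rw [hEq] at h; exact absurd hzN' (not_le.mpr h)
    · exact (point_not_in hP hemp' hcP (hxx ▸ hc0) (hyy ▸ hc1) (hc2 ▸ h)).elim
  · exact h
  · rcases blockerZ hfin hP ht' with hEq | ⟨c, hcP, hc2, hc0, hc1⟩
    · rw [hEq] at h; exact absurd hzN (not_le.mpr h)
    · exact (point_not_in hP hemp hcP (hxx ▸ hc0) (hyy ▸ hc1) (hc2 ▸ h)).elim

lemma none_unique (hfin : P.Finite)
    (hP : ∀ p ∈ P, ∀ i, 0 < p i ∧ p i < N)
    {x y z x' y' z' : ℝ}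
    (ht : MaxEmptyAnchored P N x y z) (ht' : MaxEmptyAnchored P N x' y' z')
    (hxN : x = N) (hyN : y = N) (hxN' : x' = N) (hyN' : y' = N) :
    x = x' ∧ y = y' ∧ z = z' := by
  have hemp := ht.2.2.2.1
  have hemp' := ht'.2.2.2.1
  have hzN : z ≤ N := ht.2.2.1.2
  have hzN' : z' ≤ N := ht'.2.2.1.2
  refine ⟨hxN.trans hxN'.symm, hyN.trans hyN'.symm, ?_⟩
  rcases lt_trichotomy z z' with h | h | h
  · rcases blockerZ hfin hP ht with hEq | ⟨c, hcP, hc2, hc0, hc1⟩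
    · rw [hEq] at h; exact absurd hzN' (not_le.mpr h)
    · exact (point_not_in hP hemp' hcP (hxN' ▸ hxN ▸ hc0) (hyN' ▸ hyN ▸ hc1) (hc2 ▸ h)).elim
  · exact h
  · rcases blockerZ hfin hP ht' with hEq | ⟨c, hcP, hc2, hc0, hc1⟩
    · rw [hEq] at h; exact absurd hzN (not_le.mpr h)
    · exact (point_not_in hP hemp hcP (hxN ▸ hxN' ▸ hc0) (hyN ▸ hyN' ▸ hc1) (hc2 ▸ h)).elim

open Classical in
/-- The charging map: each maximal box is charged to its latest blocker. -/
noncomputable def pick (P : Set (Fin 3 → ℝ)) (t : ℝ × ℝ × ℝ) :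
    Option ((Fin 3 → ℝ) ⊕ (Fin 3 → ℝ)) :=
  if hx : ∃ a ∈ P, a 0 = t.1 ∧ a 1 < t.2.1 ∧ a 2 < t.2.2 then
    if hy : ∃ b ∈ P, b 1 = t.2.1 ∧ b 0 < t.1 ∧ b 2 < t.2.2 then
      if hy.choose 2 < hx.choose 2 then some (Sum.inl hx.choose)
      else some (Sum.inr hy.choose)
    else some (Sum.inl hx.choose)
  else if hy : ∃ b ∈ P, b 1 = t.2.1 ∧ b 0 < t.1 ∧ b 2 < t.2.2 then
    some (Sum.inr hy.choose)
  else none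

lemma pick_inl_spec (hfin : P.Finite)
    (hP : ∀ p ∈ P, ∀ i, 0 < p i ∧ p i < N)
    {t : ℝ × ℝ × ℝ} (ht : MaxEmptyAnchored P N t.1 t.2.1 t.2.2)
    {a : Fin 3 → ℝ} (h : pick P t = some (Sum.inl a)) :
    a ∈ P ∧ a 0 = t.1 ∧ a 1 < t.2.1 ∧ a 2 < t.2.2 ∧
      (t.2.1 = N ∨ ∃ b ∈ P, b 1 = t.2.1 ∧ b 0 < t.1 ∧ b 2 < a 2) := by
  unfold pick at h
  split_ifs at h with hx hy hlt hy2
  · simp only [Option.some.injEq, Sum.inl.injEq] at h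
    subst h
    obtain ⟨haP, h0, h1, h2⟩ := hx.choose_spec
    exact ⟨haP, h0, h1, h2, Or.inr ⟨hy.choose, hy.choose_spec.1, hy.choose_spec.2.1,
      hy.choose_spec.2.2.1, hlt⟩⟩
  · simp at h
  · simp only [Option.some.injEq, Sum.inl.injEq] at h
    subst h
    obtain ⟨haP, h0, h1, h2⟩ := hx.choose_spec
    exact ⟨haP, h0, h1, h2, Or.inl ((blockerY hfin hP ht).resolve_right hy)⟩
  · simp at h

lemma pick_inr_spec (hfin : P.Finite)
    (hP : ∀ p ∈ P, ∀ i, 0 < p i ∧ p i < N)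
    (hgen : ∀ p ∈ P, ∀ q ∈ P, p ≠ q → ∀ i : Fin 3, p i ≠ q i)
    {t : ℝ × ℝ × ℝ} (ht : MaxEmptyAnchored P N t.1 t.2.1 t.2.2)
    {a : Fin 3 → ℝ} (h : pick P t = some (Sum.inr a)) :
    a ∈ P ∧ a 1 = t.2.1 ∧ a 0 < t.1 ∧ a 2 < t.2.2 ∧
      (t.1 = N ∨ ∃ b ∈ P, b 0 = t.1 ∧ b 1 < t.2.1 ∧ b 2 < a 2) := by
  unfold pick at h
  split_ifs at h with hx hy hlt hy2
  · simp at h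
  · simp only [Option.some.injEq, Sum.inr.injEq] at h
    subst h
    obtain ⟨haP, h1, h0, h2⟩ := hy.choose_spec
    obtain ⟨hbP, g0, g1, g2⟩ := hx.choose_spec
    have hne : hx.choose ≠ hy.choose := by
      intro he
      rw [he] at g0
      exact absurd (g0 ▸ h0) (lt_irrefl _)
    have hlt2 : hx.choose 2 < hy.choose 2 :=
      lt_of_le_of_ne (not_lt.mp hlt) (hgen _ hbP _ haP hne 2)
    exact ⟨haP, h1, h0, h2, Or.inr ⟨hx.choose, hbP, g0, g1, hlt2⟩⟩
  · simp at h
  · simp only [Option.some.injEq, Sum.inr.injEq] at h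
    subst h
    obtain ⟨haP, h1, h0, h2⟩ := hy2.choose_spec
    exact ⟨haP, h1, h0, h2, Or.inl ((blockerX hfin hP ht).resolve_right hx)⟩

lemma pick_none_spec {t : ℝ × ℝ × ℝ} (h : pick P t = none) :
    ¬ (∃ a ∈ P, a 0 = t.1 ∧ a 1 < t.2.1 ∧ a 2 < t.2.2) ∧
    ¬ (∃ b ∈ P, b 1 = t.2.1 ∧ b 0 < t.1 ∧ b 2 < t.2.2) := by
  unfold pick at h
  split_ifs at h with hx hy hlt hy2
  exact ⟨hx, hy2⟩

lemma pick_mem (t : ℝ × ℝ × ℝ) :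
    pick P t ∈ insert none (some '' (Sum.inl '' P ∪ Sum.inr '' P)) := by
  unfold pick
  split_ifs with hx hy hlt hy
  · exact Set.mem_insert_of_mem _ ⟨_, Or.inl ⟨_, hx.choose_spec.1, rfl⟩, rfl⟩
  · exact Set.mem_insert_of_mem _ ⟨_, Or.inr ⟨_, hy.choose_spec.1, rfl⟩, rfl⟩
  · exact Set.mem_insert_of_mem _ ⟨_, Or.inl ⟨_, hx.choose_spec.1, rfl⟩, rfl⟩
  · exact Set.mem_insert_of_mem _ ⟨_, Or.inr ⟨_, hy.choose_spec.1, rfl⟩, rfl⟩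
  · exact Set.mem_insert _ _

end CardMaxAux

open CardMaxAux in
/-- The number of maximal empty anchored boxes is linear: for `P ⊂ (0,N)³` finite with
`m` points having pairwise distinct coordinates per axis, the number of maximal empty
boxes anchored at the origin within `[0,N]³` is at most `2m + 1`. -/
theorem card_max_empty_anchored_boxes_le
    (P : Set (Fin 3 → ℝ)) (m : ℕ) (hfin : P.Finite) (hcard : P.ncard = m)
    (N : ℝ) (hN : 0 < N)
    (hP : ∀ p ∈ P, ∀ i, 0 < p i ∧ p i < N)
    (hgen : ∀ p ∈ P, ∀ q ∈ P, p ≠ q → ∀ i : Fin 3, p i ≠ q i) :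
    {t : ℝ × ℝ × ℝ | MaxEmptyAnchored P N t.1 t.2.1 t.2.2}.ncard ≤ 2 * m + 1 := by
  classical
  set S : Set (ℝ × ℝ × ℝ) := {t | MaxEmptyAnchored P N t.1 t.2.1 t.2.2} with hS
  set Q : Set ((Fin 3 → ℝ) ⊕ (Fin 3 → ℝ)) := Sum.inl '' P ∪ Sum.inr '' P with hQ
  have hQfin : Q.Finite := (hfin.image _).union (hfin.image _)
  have hTfin : (insert none (some '' Q) :
      Set (Option ((Fin 3 → ℝ) ⊕ (Fin 3 → ℝ)))).Finite := (hQfin.image _).insert _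
  have hinj : Set.InjOn (pick P) S := by
    intro t htS t' htS' heq
    have ht : MaxEmptyAnchored P N t.1 t.2.1 t.2.2 := htS
    have ht' : MaxEmptyAnchored P N t'.1 t'.2.1 t'.2.2 := htS'
    have key : t.1 = t'.1 ∧ t.2.1 = t'.2.1 ∧ t.2.2 = t'.2.2 := by
      cases hpt : pick P t with
      | none =>
          rw [hpt] at heq
          obtain ⟨hnx, hny⟩ := pick_none_spec hpt
          obtain ⟨hnx', hny'⟩ := pick_none_spec heq.symm
          exact none_unique hfin hP ht ht'
            ((blockerX hfin hP ht).resolve_right hnx)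
            ((blockerY hfin hP ht).resolve_right hny)
            ((blockerX hfin hP ht').resolve_right hnx')
            ((blockerY hfin hP ht').resolve_right hny')
      | some v =>
          cases v with
          | inl a =>
              rw [hpt] at heq
              obtain ⟨haP, h0, h1, h2, hs⟩ := pick_inl_spec hfin hP ht hpt
              obtain ⟨_, h0', h1', h2', hs'⟩ := pick_inl_spec hfin hP ht' heq.symm
              exact left_unique hfin hP ht ht' haP h0 h1 h2 hs h0' h1' h2' hs'
          | inr a =>
              rw [hpt] at heq
              obtain ⟨haP, h1, h0, h2, hs⟩ := pick_inr_spec hfin hP hgen ht hpt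
              obtain ⟨_, h1', h0', h2', hs'⟩ := pick_inr_spec hfin hP hgen ht' heq.symm
              exact right_unique hfin hP ht ht' haP h1 h0 h2 hs h1' h0' h2' hs'
    obtain ⟨e1, e2, e3⟩ := key
    exact Prod.ext e1 (Prod.ext e2 e3)
  have himg : pick P '' S ⊆ insert none (some '' Q) := by
    rintro o ⟨t, _, rfl⟩
    exact pick_mem t
  have hdisj : Disjoint (Sum.inl '' P : Set ((Fin 3 → ℝ) ⊕ (Fin 3 → ℝ))) (Sum.inr '' P) := by
    rw [Set.disjoint_left]
    rintro o ⟨p, _, rfl⟩ ⟨q, _, hq⟩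
    simp at hq
  have hQcard : Q.ncard = m + m := by
    rw [hQ, Set.ncard_union_eq hdisj (hfin.image _) (hfin.image _),
      Set.ncard_image_of_injective _ Sum.inl_injective,
      Set.ncard_image_of_injective _ Sum.inr_injective, hcard]
  calc S.ncard = (pick P '' S).ncard := (Set.ncard_image_of_injOn hinj).symm
    _ ≤ (insert none (some '' Q)).ncard := Set.ncard_le_ncard himg hTfin
    _ ≤ (some '' Q).ncard + 1 := Set.ncard_insert_le _ _
    _ = Q.ncard + 1 := by rw [Set.ncard_image_of_injective _ (Option.some_injective _)]
    _ = (m + m) + 1 := by rw [hQcard]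
    _ ≤ 2 * m + 1 := by omega
end
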